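/- For every integer n ≥ 1, every α > 0 and every t > 0, the recurrence coefficient α_n(t) admits the integral representation α_n(t) = 2n + 1 + α + t γ_n(t)² ∫_0^∞ π_n(y; t)² w(y; t, α)/y dy; equivalently, a_n(t) = t γ_n(t)² ∫_0^∞ π_n(y; t)² w(y; t, α)/y dy. -/

import Mathlib

/-!
Integrate the derivative of `x ^ (α + 1) * π_n(x)² * e^{-x - t/x}` over `(0, ∞)`: the result
is `0`, because `t > 0` makes the function vanish at `0⁺` and the exponential makes it vanish
at `∞`. Expanding the derivative gives four moments of `π_n²` against the weight `w`:
`∫ x (π_n²)' w = 2n h_n`, since `x π_n' - n π_n` has degree `< n` and is thus orthogonal to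
`π_n`; `(α + 1) ∫ π_n² w = (α + 1) h_n`; `∫ x π_n² w = α_n h_n` by the three-term recurrence;
and `t ∫ π_n² w / x`. Solving for `α_n` gives the representation, as `γ_n² = 1 / h_n`.
-/

open MeasureTheory Set
open Real Filter Topology Polynomial Asymptotics

theorem integrableOn_Ioc_of_tendsto_nhdsGT {g : ℝ → ℝ} {a b l : ℝ}
    (hc : ContinuousOn g (Ioi a)) (hl : Tendsto g (𝓝[>] a) (𝓝 l)) :
    IntegrableOn g (Ioc a b) := by
  classical
  have hcont : ContinuousOn (Function.update g a l) (Icc a b) := by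
    intro x hx
    rcases hx.1.eq_or_lt with rfl | hax
    · exact continuousWithinAt_update_same.mpr
        (hl.mono_left (nhdsWithin_mono _ fun y hy => lt_of_le_of_ne hy.1.1 (Ne.symm hy.2)))
    · refine ((hc.continuousAt (Ioi_mem_nhds hax)).congr_of_eventuallyEq ?_).continuousWithinAt
      filter_upwards [Ioi_mem_nhds hax] with y hy using Function.update_of_ne hy.ne' _ _
  exact (hcont.integrableOn_Icc.mono_set Ioc_subset_Icc_self).congr_fun
    (fun y hy => Function.update_of_ne hy.1.ne' _ _) measurableSet_Ioc

theorem integrableOn_Ioi_of_tendsto_nhdsGT_of_isBigO_exp_neg {g : ℝ → ℝ} {a b l : ℝ}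
    (hb : 0 < b) (hc : ContinuousOn g (Ioi a)) (hl : Tendsto g (𝓝[>] a) (𝓝 l))
    (ho : g =O[atTop] fun x => exp (-b * x)) : IntegrableOn g (Ioi a) := by
  rw [← Ioc_union_Ioi_eq_Ioi (le_add_of_nonneg_right zero_le_one : a ≤ a + 1)]
  exact (integrableOn_Ioc_of_tendsto_nhdsGT hc hl).union
    (integrable_of_isBigO_exp_neg hb (hc.mono fun x hx => by simp at hx ⊢; linarith) ho)

theorem integral_Ioi_of_hasDerivAt_of_tendsto_nhdsGT {F D : ℝ → ℝ} {a l m : ℝ}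
    (hderiv : ∀ x ∈ Ioi a, HasDerivAt F (D x) x) (hDint : IntegrableOn D (Ioi a))
    (hl : Tendsto F (𝓝[>] a) (𝓝 l)) (hm : Tendsto F atTop (𝓝 m)) :
    ∫ x in Ioi a, D x = m - l := by
  classical
  have hupd : ∀ x ∈ Ioi a, HasDerivAt (Function.update F a l) (D x) x := fun x hx =>
    (hderiv x hx).congr_of_eventuallyEq <| by
      filter_upwards [Ioi_mem_nhds hx] with y hy using Function.update_of_ne hy.ne' _ _
  have hcont : ContinuousWithinAt (Function.update F a l) (Ici a) a := by
    rw [← continuousWithinAt_Ioi_iff_Ici, continuousWithinAt_update_same]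
    exact hl.mono_left (nhdsWithin_mono _ sdiff_subset)
  have htop : Tendsto (Function.update F a l) atTop (𝓝 m) := hm.congr' <| by
    filter_upwards [eventually_gt_atTop a] with y hy using (Function.update_of_ne hy.ne' _ _).symm
  simpa using integral_Ioi_of_hasDerivAt_of_tendsto hcont hupd hDint htop

section Weight

variable (p : ℝ[X]) (β c t : ℝ)

theorem continuousOn_eval_mul_rpow_mul_exp :
    ContinuousOn (fun x => p.eval x * (x ^ β * exp (-(c * x) - t / x))) (Ioi 0) := by
  intro x (hx : 0 < x)
  apply ContinuousAt.continuousWithinAt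
  fun_prop (disch := first | exact hx.ne' | exact Or.inl hx.ne')

theorem tendsto_eval_mul_rpow_mul_exp_nhdsGT_zero (ht : 0 < t) :
    Tendsto (fun x => p.eval x * (x ^ β * exp (-(c * x) - t / x))) (𝓝[>] 0) (𝓝 0) := by
  have hsing : Tendsto (fun x : ℝ => x ^ β * exp (-t * x⁻¹)) (𝓝[>] 0) (𝓝 0) := by
    refine ((tendsto_rpow_mul_exp_neg_mul_atTop_nhds_zero (-β) t ht).comp
      tendsto_inv_nhdsGT_zero).congr' ?_
    filter_upwards [self_mem_nhdsWithin] with x (hx : 0 < x)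
    simp [inv_rpow hx.le, rpow_neg hx.le]
  have hreg : Tendsto (fun x => p.eval x * exp (-(c * x))) (𝓝[>] 0)
      (𝓝 (p.eval 0 * exp (-(c * 0)))) :=
    (by fun_prop : Continuous fun x => p.eval x * exp (-(c * x))).continuousAt.tendsto.mono_left
      nhdsWithin_le_nhds
  simpa using (hreg.mul hsing).congr' (Eventually.of_forall fun x => by
    simp only [sub_eq_add_neg, exp_add, div_eq_mul_inv, neg_mul]; ring)

theorem tendsto_eval_mul_rpow_mul_exp_atTop (hc : 0 < c) (ht : 0 ≤ t) :
    Tendsto (fun x => p.eval x * (x ^ β * exp (-(c * x) - t / x))) atTop (𝓝 0) := by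
  have hpoly : (fun x => p.eval x) =O[atTop] fun x => x ^ (p.natDegree : ℝ) := by
    simpa using isBigO_atTop_of_degree_le p (X ^ p.natDegree) (by simp [degree_le_natDegree])
  have hexp : (fun x => x ^ β * exp (-(c * x) - t / x)) =O[atTop]
      fun x => x ^ β * exp (-c * x) := by
    refine IsBigO.of_bound 1 ?_
    filter_upwards [eventually_gt_atTop 0] with x hx
    have : t / x ≥ 0 := by positivity
    rw [one_mul, norm_mul, norm_mul, norm_of_nonneg (exp_pos _).le, norm_of_nonneg (exp_pos _).le]
    gcongr
    linarith
  refine (hpoly.mul hexp).trans_tendsto ?_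
  refine (tendsto_rpow_mul_exp_neg_mul_atTop_nhds_zero (p.natDegree + β) c hc).congr' ?_
  filter_upwards [eventually_gt_atTop 0] with x hx
  rw [rpow_add hx, mul_assoc]

theorem integrableOn_eval_mul_rpow_mul_exp (ht : 0 < t) :
    IntegrableOn (fun x => p.eval x * (x ^ β * exp (-x - t / x))) (Ioi 0) := by
  have hc := continuousOn_eval_mul_rpow_mul_exp p β 1 t
  have hl := tendsto_eval_mul_rpow_mul_exp_nhdsGT_zero p β 1 t ht
  simp only [one_mul] at hc hl
  refine integrableOn_Ioi_of_tendsto_nhdsGT_of_isBigO_exp_neg one_half_pos hc hl ?_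
  have := (tendsto_eval_mul_rpow_mul_exp_atTop p β (1 / 2) t one_half_pos ht.le).isBigO_one ℝ
  refine (this.mul (isBigO_refl (fun x => exp (-(1 / 2) * x)) atTop)).congr (fun x => ?_)
    (fun x => one_mul _)
  rw [mul_assoc, mul_assoc, ← exp_add]
  ring_nf

end Weight

noncomputable def weightFunctional (α t : ℝ) (ht : 0 < t) : ℝ[X] →ₗ[ℝ] ℝ where
  toFun p := ∫ x in Ioi 0, p.eval x * (x ^ α * exp (-x - t / x))
  map_add' p q := by
    simp only [eval_add, add_mul]
    exact integral_add (integrableOn_eval_mul_rpow_mul_exp p α t ht)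
      (integrableOn_eval_mul_rpow_mul_exp q α t ht)
  map_smul' a p := by
    simp only [eval_smul, smul_eq_mul, mul_assoc, RingHom.id_apply]
    exact integral_const_mul a _

theorem weightFunctional_apply (α t : ℝ) (ht : 0 < t) (p : ℝ[X]) :
    weightFunctional α t ht p = ∫ x in Ioi 0, p.eval x * (x ^ α * exp (-x - t / x)) := rfl

/-- The derivative of `x ^ (α + 1) * f(x) * e^{-x - t/x}` integrates to zero over `(0, ∞)`. -/
theorem weightFunctional_integration_by_parts (α t : ℝ) (ht : 0 < t) (f : ℝ[X]) :
    weightFunctional α t ht (X * derivative f + (α + 1) • f - X * f)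
      + t * weightFunctional (α - 1) t ht f = 0 := by
  set g := X * derivative f + (α + 1) • f - X * f
  have hderiv : ∀ x ∈ Ioi (0 : ℝ),
      HasDerivAt (fun x => f.eval x * (x ^ (α + 1) * exp (-x - t / x)))
        (g.eval x * (x ^ α * exp (-x - t / x))
          + t * (f.eval x * (x ^ (α - 1) * exp (-x - t / x)))) x := by
    intro x (hx : 0 < x)
    have hpow : HasDerivAt (fun y => y ^ (α + 1)) ((α + 1) * x ^ α) x := by
      simpa using hasDerivAt_rpow_const (p := α + 1) (Or.inl hx.ne')
    have hexp : HasDerivAt (fun y => -y - t / y) (-1 + t / x ^ 2) x := by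
      simpa [div_eq_mul_inv] using
        (hasDerivAt_neg' x).fun_sub ((hasDerivAt_inv hx.ne').const_mul t)
    refine ((f.hasDerivAt x).mul (hpow.mul hexp.exp)).congr_deriv ?_
    simp only [g, eval_sub, eval_add, eval_mul, eval_smul, smul_eq_mul, eval_X, Pi.mul_apply]
    rw [rpow_add hx, rpow_sub hx, rpow_one]
    field_simp
    ring
  have hlim := tendsto_eval_mul_rpow_mul_exp_nhdsGT_zero f (α + 1) 1 t ht
  have htop := tendsto_eval_mul_rpow_mul_exp_atTop f (α + 1) 1 t one_pos ht.le
  simp only [one_mul] at hlim htop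
  have hgint := integrableOn_eval_mul_rpow_mul_exp g α t ht
  have hfint := (integrableOn_eval_mul_rpow_mul_exp f (α - 1) t ht).const_mul t
  have hint := integral_Ioi_of_hasDerivAt_of_tendsto_nhdsGT hderiv (hgint.add hfint) hlim htop
  rwa [integral_add hgint hfint, integral_const_mul, sub_zero] at hint

section Orthogonal

variable {R M : Type*} [CommRing R] [AddCommGroup M] [Module R M] (L : R[X] →ₗ[R] M)
  {q : ℕ → R[X]}

theorem degree_X_mul_derivative_sub_natDegree_smul_lt (p : R[X]) :
    (X * derivative p - p.natDegree • p).degree < (p.natDegree : WithBot ℕ) := by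
  rw [degree_lt_iff_coeff_zero]
  rintro (_ | m) hm
  · simp [Nat.le_zero.mp hm]
  · rw [coeff_sub, coeff_X_mul, coeff_derivative, coeff_smul, nsmul_eq_mul]
    rcases hm.eq_or_lt with hm | hm
    · rw [hm]; push_cast; ring
    · simp [coeff_eq_zero_of_natDegree_lt hm]

theorem map_mul_eq_zero_of_degree_lt (hmonic : ∀ k, (q k).Monic)
    (hdeg : ∀ k, (q k).natDegree = k) {p : R[X]} {n : ℕ} (horth : ∀ k < n, L (p * q k) = 0)
    {r : R[X]} (hr : r.degree < n) : L (p * r) = 0 := by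
  induction n generalizing r with
  | zero => simp [degree_eq_bot.mp (Nat.WithBot.lt_zero_iff.mp hr)]
  | succ n ih =>
    have hlow : (r - r.coeff n • q n).degree < n := by
      rw [degree_lt_iff_coeff_zero]
      intro m hm
      rcases hm.eq_or_lt with h | hm
      · have hlead : (q n).coeff n = 1 := by simpa [hdeg n] using (hmonic n).coeff_natDegree
        simp [← Nat.cast_inj.mp h, hlead]
      · rw [coeff_sub, coeff_smul, coeff_eq_zero_of_natDegree_lt ((hdeg n).trans_lt hm),
          coeff_eq_zero_of_degree_lt (hr.trans_le (WithBot.coe_le_coe.mpr hm)), smul_zero,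
          sub_zero]
    have hsplit : p * r = p * (r - r.coeff n • q n) + r.coeff n • (p * q n) := by
      rw [mul_sub, mul_smul_comm, sub_add_cancel]
    rw [hsplit, map_add, map_smul, ih (fun k hk => horth k (by omega)) hlow,
      horth n n.lt_succ_self, smul_zero, add_zero]

theorem map_mul_X_mul_derivative (hmonic : ∀ k, (q k).Monic) (hdeg : ∀ k, (q k).natDegree = k)
    {n : ℕ} (horth : ∀ k < n, L (q n * q k) = 0) :
    L (q n * (X * derivative (q n))) = n • L (q n * q n) := by
  have h := map_mul_eq_zero_of_degree_lt L hmonic hdeg horth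
    (hdeg n ▸ degree_X_mul_derivative_sub_natDegree_smul_lt (q n))
  rwa [mul_sub, map_sub, mul_smul_comm, map_nsmul, sub_eq_zero] at h

theorem map_X_mul_derivative_mul_self (hmonic : ∀ k, (q k).Monic)
    (hdeg : ∀ k, (q k).natDegree = k) {n : ℕ} (horth : ∀ k < n, L (q n * q k) = 0) :
    L (X * derivative (q n * q n)) = (2 * n) • L (q n * q n) := by
  rw [derivative_mul, show X * (derivative (q n) * q n + q n * derivative (q n))
    = 2 • (q n * (X * derivative (q n))) by ring, map_nsmul,
    map_mul_X_mul_derivative L hmonic hdeg horth, mul_nsmul']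

theorem map_X_mul_mul_self_of_recurrence {p r s : R[X]} {a b : R}
    (hrec : X * p = r + a • p + b • s) (hr : L (r * p) = 0) (hs : L (s * p) = 0) :
    L (X * (p * p)) = a • L (p * p) := by
  rw [← mul_assoc, hrec, add_mul, add_mul, smul_mul_assoc, smul_mul_assoc, map_add, map_add,
    map_smul, map_smul, hr, hs, smul_zero, zero_add, add_zero]

end Orthogonal

theorem recurrence_coeff_integral_representation_general
    (α : ℝ) (t : ℝ) (ht : 0 < t) (n : ℕ) (hn : 1 ≤ n)
    (P : ℕ → ℝ → ℝ → ℝ) (h : ℕ → ℝ → ℝ) (A B : ℕ → ℝ → ℝ)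
    (hmonic : ∀ m : ℕ, ∀ τ > (0:ℝ), ∃ p : Polynomial ℝ,
      p.Monic ∧ p.natDegree = m ∧ ∀ x, P m τ x = p.eval x)
    (horth : ∀ j k : ℕ, ∀ τ > (0:ℝ),
      (∫ x in Ioi (0:ℝ), P j τ x * P k τ x * (x ^ α * Real.exp (-x - τ / x)))
        = if j = k then h j τ else 0)
    (hpos : ∀ j : ℕ, ∀ τ > (0:ℝ), 0 < h j τ)
    (hrec : ∀ m : ℕ, 1 ≤ m → ∀ τ > (0:ℝ), ∀ x : ℝ,
      x * P m τ x = P (m + 1) τ x + A m τ * P m τ x + B m τ * P (m - 1) τ x) :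
    A n t = 2 * n + 1 + α +
      t * ((h n t) ^ (-(1:ℝ) / 2)) ^ 2 *
        ∫ y in Ioi (0:ℝ), (P n t y) ^ 2 * (y ^ α * Real.exp (-y - t / y)) / y := by
  choose q hqm hqd hqe using fun m => hmonic m t ht
  set L := weightFunctional α t ht
  have hL : ∀ j k, L (q j * q k) = if j = k then h j t else 0 := fun j k => by
    simpa [L, weightFunctional_apply, hqe, mul_assoc] using horth j k t ht
  have hLnn : L (q n * q n) = h n t := by simpa using hL n n
  have hqrec : X * q n = q (n + 1) + A n t • q n + B n t • q (n - 1) :=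
    Polynomial.funext fun x => by simpa [← hqe] using hrec n hn t ht x
  have hLX := map_X_mul_mul_self_of_recurrence L hqrec
    (by simpa using hL (n + 1) n) (by simpa [show n - 1 ≠ n by omega] using hL (n - 1) n)
  have hLXd := map_X_mul_derivative_mul_self L hqm hqd (n := n) fun k hk => by
    simpa [hk.ne'] using hL n k
  have hibp := weightFunctional_integration_by_parts α t ht (q n * q n)
  rw [map_sub, map_add, map_smul, hLXd, hLX, hLnn, smul_eq_mul, smul_eq_mul,
    nsmul_eq_mul] at hibp
  have hJ : weightFunctional (α - 1) t ht (q n * q n)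
      = ∫ y in Ioi 0, P n t y ^ 2 * (y ^ α * exp (-y - t / y)) / y := by
    refine setIntegral_congr_fun measurableSet_Ioi fun y (hy : 0 < y) => ?_
    rw [hqe, eval_mul, rpow_sub hy, rpow_one]
    ring
  have hγ : (h n t ^ (-(1:ℝ) / 2)) ^ 2 = (h n t)⁻¹ := by
    rw [← rpow_natCast, ← rpow_mul (hpos n t ht).le]
    norm_num [rpow_neg_one]
  rw [← hJ, hγ]
  field_simp [(hpos n t ht).ne']
  push_cast at hibp
  linarith

/-- For every integer `n ≥ 1`, `α > 0`, `t > 0`, the recurrence coefficient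
`α_n(t)` for the weight `w(x) = x^α e^{-x-t/x}` admits the integral representation
`α_n(t) = 2n + 1 + α + t γ_n(t)² ∫_0^∞ π_n(y)² w(y)/y dy`, where `γ_n(t) = h_n(t)^{-1/2}`. -/
theorem recurrence_coeff_integral_representation
    (α : ℝ) (hα : 0 < α) (t : ℝ) (ht : 0 < t) (n : ℕ) (hn : 1 ≤ n)
    (P : ℕ → ℝ → ℝ → ℝ) (h : ℕ → ℝ → ℝ) (A B : ℕ → ℝ → ℝ)
    (hmonic : ∀ m : ℕ, ∀ τ > (0:ℝ), ∃ p : Polynomial ℝ,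
      p.Monic ∧ p.natDegree = m ∧ ∀ x, P m τ x = p.eval x)
    (horth : ∀ j k : ℕ, ∀ τ > (0:ℝ),
      (∫ x in Ioi (0:ℝ), P j τ x * P k τ x * (x ^ α * Real.exp (-x - τ / x)))
        = if j = k then h j τ else 0)
    (hpos : ∀ j : ℕ, ∀ τ > (0:ℝ), 0 < h j τ)
    (hrec : ∀ m : ℕ, 1 ≤ m → ∀ τ > (0:ℝ), ∀ x : ℝ,
      x * P m τ x = P (m + 1) τ x + A m τ * P m τ x + B m τ * P (m - 1) τ x) :
    A n t = 2 * n + 1 + α +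
      t * ((h n t) ^ (-(1:ℝ) / 2)) ^ 2 *
        ∫ y in Ioi (0:ℝ), (P n t y) ^ 2 * (y ^ α * Real.exp (-y - t / y)) / y :=
  recurrence_coeff_integral_representation_general α t ht n hn P h A B hmonic horth hpos hrec
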